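/- If A is an m×n nonnegative real matrix whose k-th column contains exactly two nonzero entries a_{ik} ≠ 0 and a_{jk} ≠ 0 with i ≠ j, and B = A_{ij:k} is the (m-1)×(n-1) matrix obtained from A by replacing row i with a_{jk}·(row i) + a_{ik}·(row j) and then deleting row j and column k, then per A = per B (stated for m = n square matrices). -/

import Mathlib

open Finset Nat

def lucas : ℕ → ℕ
  | 0 => 2
  | 1 => 1
  | n + 2 => lucas (n + 1) + lucas n

/-!
Expand `per A` along column `k`: only the rows `i` and `j` contribute, giving
`a_ik per A(i|k) + a_jk per A(j|k)`. The permanent of the contraction is linear in its row coming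
from row `i`, so it splits as `a_jk per A(j|k) + a_ik per A'`, where `A'` is `A` with row `i`
replaced by row `j` and then row `j` and column `k` deleted; `A'` is `A(i|k)` with its rows
permuted.
-/

open Equiv Function

namespace Matrix

theorem submatrix_updateRow_of_injective {l m n o : Type*} [DecidableEq l] [DecidableEq m]
    {R : Type*} (A : Matrix m n R) {f : l → m} (hf : Injective f) (c : o → n) {p : l} {i : m}
    (hp : f p = i) (v : n → R) :
    (A.updateRow i v).submatrix f c = (A.submatrix f c).updateRow p (v ∘ c) := by
  subst hp
  ext r s
  rcases eq_or_ne r p with rfl | hr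
  · simp
  · simp [updateRow_ne (hf.ne hr), updateRow_ne hr]

section Permanent

variable {R : Type*} [CommSemiring R]

theorem permanent_updateCol_add {n : Type*} [DecidableEq n] [Fintype n] (M : Matrix n n R)
    (j : n) (u v : n → R) :
    permanent (M.updateCol j (u + v)) =
      permanent (M.updateCol j u) + permanent (M.updateCol j v) := by
  simp only [permanent, ← Finset.mul_prod_erase _ _ (Finset.mem_univ j), updateCol_self,
    Pi.add_apply, add_mul, ← Finset.sum_add_distrib]
  congr 1 with σ
  congr 2 <;> exact Finset.prod_congr rfl fun x hx => by
    simp [updateCol_ne (Finset.ne_of_mem_erase hx)]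

theorem permanent_updateRow_add {n : Type*} [DecidableEq n] [Fintype n] (M : Matrix n n R)
    (j : n) (u v : n → R) :
    permanent (M.updateRow j (u + v)) =
      permanent (M.updateRow j u) + permanent (M.updateRow j v) := by
  rw [← permanent_transpose, ← updateCol_transpose, permanent_updateCol_add,
    updateCol_transpose, updateCol_transpose, permanent_transpose, permanent_transpose]

theorem permanent_submatrix_eq_of_range_eq {m n o : Type*} [DecidableEq m] [Fintype m]
    (A : Matrix n o R) {f g : m → n} (hf : Injective f) (hg : Injective g)
    (hfg : Set.range f = Set.range g) (c : m → o) :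
    permanent (A.submatrix f c) = permanent (A.submatrix g c) := by
  let σ : Perm m := (ofInjective f hf).trans ((setCongr hfg).trans (ofInjective g hg).symm)
  have hσ : g ∘ σ = f := funext fun p => by simp [σ, apply_ofInjective_symm hg]
  rw [← hσ, ← permanent_permute_cols σ (A.submatrix g c)]
  rfl

theorem permanent_succ_column_zero {n : ℕ} (A : Matrix (Fin (n + 1)) (Fin (n + 1)) R) :
    permanent A = ∑ r, A r 0 * permanent (A.submatrix r.succAbove Fin.succ) := by
  rw [permanent, Finset.univ_perm_fin_succ, ← Finset.univ_product_univ]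
  simp only [Finset.sum_map, toEmbedding_apply, Finset.sum_product, Fin.prod_univ_succ,
    Perm.decomposeFin_symm_apply_zero, Perm.decomposeFin_symm_apply_succ, ← Finset.mul_sum]
  refine Finset.sum_congr rfl fun r _ => congrArg _ ?_
  refine Fin.cases ?_ (fun r => ?_) r
  · simp [permanent, Fin.succAbove_zero]
  · -- `decomposeFin` and `succAbove` order the remaining rows differently, up to a cycle.
    rw [← permanent_permute_cols (Fin.cycleRange r), permanent]
    refine Finset.sum_congr rfl fun σ _ => Finset.prod_congr rfl fun x _ => ?_
    simp [Fin.succAbove_cycleRange]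

theorem permanent_succ_column {n : ℕ} (A : Matrix (Fin (n + 1)) (Fin (n + 1)) R)
    (k : Fin (n + 1)) :
    permanent A = ∑ r, A r k * permanent (A.submatrix r.succAbove k.succAbove) := by
  rw [← permanent_permute_rows k.cycleRange.symm, permanent_succ_column_zero]
  simp only [submatrix_apply, id, Fin.cycleRange_symm_zero, submatrix_submatrix, comp_def,
    Fin.cycleRange_symm_succ]

theorem permanent_submatrix_updateRow_succAbove {n : ℕ}
    (A : Matrix (Fin (n + 1)) (Fin (n + 1)) R) (i j k : Fin (n + 1)) :
    permanent ((A.updateRow i (A j)).submatrix j.succAbove k.succAbove) =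
      permanent (A.submatrix i.succAbove k.succAbove) := by
  have hrows : (A.updateRow i (A j)).submatrix j.succAbove k.succAbove =
      A.submatrix (Equiv.swap i j ∘ j.succAbove) k.succAbove := by
    ext p q
    rcases eq_or_ne (j.succAbove p) i with h | h
    · simp [h]
    · simp [updateRow_ne h, swap_apply_of_ne_of_ne h (Fin.succAbove_ne j p)]
  rw [hrows, permanent_submatrix_eq_of_range_eq _
    ((Equiv.swap i j).injective.comp Fin.succAbove_right_injective) Fin.succAbove_right_injective]
  rw [Set.range_comp, Fin.range_succAbove, Fin.range_succAbove, Equiv.image_compl,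
    Set.image_singleton, swap_apply_right]

end Permanent

end Matrix

open Matrix

theorem permanent_contraction_col_general (n : ℕ) (A : Matrix (Fin (n + 1)) (Fin (n + 1)) ℝ)
    (k i j : Fin (n + 1)) (hij : i ≠ j)
    (hzero : ∀ l, l ≠ i → l ≠ j → A l k = 0) :
    Matrix.permanent A =
      Matrix.permanent ((A.updateRow i (A j k • A i + A i k • A j)).submatrix
        j.succAbove k.succAbove) := by
  obtain ⟨p, hp⟩ := Fin.exists_succAbove_eq hij
  have hexpand : permanent A =
      A i k * permanent (A.submatrix i.succAbove k.succAbove) +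
        A j k * permanent (A.submatrix j.succAbove k.succAbove) := by
    rw [permanent_succ_column A k]
    exact Fintype.sum_eq_add _ _ hij fun l hl => by rw [hzero l hl.1 hl.2, zero_mul]
  have hrow := submatrix_updateRow_of_injective A Fin.succAbove_right_injective k.succAbove hp
  rw [hexpand, hrow, Pi.add_comp, Pi.smul_comp, Pi.smul_comp, permanent_updateRow_add,
    permanent_updateRow_smul, permanent_updateRow_smul, ← hrow, ← hrow,
    permanent_submatrix_updateRow_succAbove A i j, updateRow_eq_self]
  ring

theorem permanent_contraction_col (n : ℕ) (A : Matrix (Fin (n + 1)) (Fin (n + 1)) ℝ)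
    (k i j : Fin (n + 1)) (hij : i ≠ j)
    (hnonneg : ∀ a b, 0 ≤ A a b)
    (hi : A i k ≠ 0) (hj : A j k ≠ 0)
    (hzero : ∀ l, l ≠ i → l ≠ j → A l k = 0) :
    Matrix.permanent A =
      Matrix.permanent ((A.updateRow i (A j k • A i + A i k • A j)).submatrix
        j.succAbove k.succAbove) :=
  permanent_contraction_col_general n A k i j hij hzero
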